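/- arXiv:2507.00204 — 2 statements merged into one kernel-verified Lean document; each statement's English description precedes it below -/
import Mathlib

section
/- Zygmund's restriction theorem on the torus: there exists a constant C > 0 such that for every smooth function f on the two-dimensional torus Q = [0,1]² and every r > 0, (Σ_{μ∈ℤ², |μ|=r} |c_μ|²)^{1/2} ≤ C ‖f‖_{L^{4/3}(Q)}, where c_μ = ∫_Q e^{-2πi μ·x} f(x) dx are the Fourier coefficients of f. -/
open MeasureTheory Real

open scoped ENNReal NNReal

noncomputable section

namespace Zyg

def Qs : Set (ℝ × ℝ) := Set.Icc (0:ℝ) 1 ×ˢ Set.Icc (0:ℝ) 1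

lemma isCompact_Qs : IsCompact Qs := isCompact_Icc.prod isCompact_Icc

lemma integrableOn_Qs {E : Type} [NormedAddCommGroup E] {g : ℝ × ℝ → E}
    (hg : Continuous g) : IntegrableOn g Qs :=
  hg.continuousOn.integrableOn_compact isCompact_Qs

def g (m : ℤ) (t : ℝ) : ℂ := Complex.exp (-2 * π * Complex.I * ((m : ℝ) * t))

def e (k : ℤ × ℤ) (x : ℝ × ℝ) : ℂ :=
  Complex.exp (-2 * π * Complex.I * ((k.1 : ℝ) * x.1 + (k.2 : ℝ) * x.2))

lemma continuous_g (m : ℤ) : Continuous (g m) := by unfold g; fun_prop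

lemma continuous_e (k : ℤ × ℤ) : Continuous (e k) := by unfold e; fun_prop

lemma g_int (m : ℤ) : ∫ t in Set.Icc (0:ℝ) 1, g m t = if m = 0 then 1 else 0 := by
  rcases eq_or_ne m 0 with hm | hm
  · subst hm
    simp only [g, Int.cast_zero, Complex.ofReal_zero, zero_mul, mul_zero, Complex.exp_zero,
      if_pos rfl]
    simp [Measure.restrict_apply]
  · rw [if_neg hm]
    have hc : (-2 * (π:ℂ) * Complex.I * (m : ℂ)) ≠ 0 := by
      refine mul_ne_zero (mul_ne_zero (mul_ne_zero ?_ ?_) Complex.I_ne_zero) ?_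
      · norm_num
      · exact_mod_cast Complex.ofReal_ne_zero.2 Real.pi_ne_zero
      · exact_mod_cast hm
    have : ∀ t : ℝ, g m t = Complex.exp ((-2 * (π:ℂ) * Complex.I * (m : ℂ)) * (t : ℂ)) := by
      intro t; unfold g; congr 1; push_cast; ring
    rw [MeasureTheory.integral_Icc_eq_integral_Ioc,
      ← intervalIntegral.integral_of_le (zero_le_one)]
    simp_rw [this]
    rw [integral_exp_mul_complex hc]
    have h1 : Complex.exp (-2 * (π:ℂ) * Complex.I * (m:ℂ) * (1:ℝ)) = 1 := by
      have := Complex.exp_int_mul_two_pi_mul_I (-m)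
      rw [← this]; congr 1; push_cast; ring
    have h0 : Complex.exp (-2 * (π:ℂ) * Complex.I * (m:ℂ) * (0:ℝ)) = 1 := by
      rw [Complex.ofReal_zero, mul_zero, Complex.exp_zero]
    rw [h1, h0, sub_self, zero_div]

lemma e_eq_g (k : ℤ × ℤ) (x : ℝ × ℝ) : e k x = g k.1 x.1 * g k.2 x.2 := by
  rw [e, g, g, ← Complex.exp_add]; congr 1; push_cast; ring

lemma e_int (k : ℤ × ℤ) : ∫ x in Qs, e k x = if k = 0 then 1 else 0 := by
  simp_rw [e_eq_g]
  rw [Qs, Measure.volume_eq_prod, setIntegral_prod_mul, g_int, g_int]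
  rcases eq_or_ne k 0 with hk | hk
  · subst hk; simp
  · rw [if_neg hk]
    rcases (by by_contra h; push_neg at h; exact hk (Prod.ext h.1 h.2) : k.1 ≠ 0 ∨ k.2 ≠ 0) with h | h
    · rw [if_neg h, zero_mul]
    · rw [if_neg h, mul_zero]

lemma e_mul (k l : ℤ × ℤ) (x : ℝ × ℝ) : e k x * e l x = e (k + l) x := by
  rw [e, e, e, ← Complex.exp_add]; congr 1
  simp only [Prod.fst_add, Prod.snd_add]; push_cast; ring

lemma e_conj (k : ℤ × ℤ) (x : ℝ × ℝ) : (starRingEnd ℂ) (e k x) = e (-k) x := by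
  rw [e, e, ← Complex.exp_conj]; congr 1
  simp only [map_mul, map_add, map_neg, map_ofNat, Complex.conj_I, Complex.conj_ofReal,
    Prod.fst_neg, Prod.snd_neg]
  push_cast; ring

lemma e_orth (a b : ℤ × ℤ) :
    ∫ x in Qs, e a x * (starRingEnd ℂ) (e b x) = if a = b then 1 else 0 := by
  simp_rw [e_conj, e_mul, e_int]
  congr 1
  simp [sub_eq_zero, eq_comm, add_neg_eq_zero]

lemma circle_key (a b c d p q : ℝ)
    (h1 : a^2+b^2 = c^2+d^2) (h2 : p^2+q^2 = a^2+b^2)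
    (h3 : (a+c-p)^2+(b+d-q)^2 = a^2+b^2) :
    ((a-p)^2+(b-q)^2) * ((p-c)^2+(q-d)^2) * ((a+c)^2+(b+d)^2) = 0 := by
  linear_combination
    (-(1/2)*((a+c)*(2*a*((b-q)*(q-d)-(a-p)*(p-c)) - 2*b*((a-p)*(q-d)+(b-q)*(p-c)))
      + (b+d)*(2*b*((a-p)*(p-c)-(b-q)*(q-d)) - 2*a*((b-q)*(p-c)+(a-p)*(q-d))))) * h1
    + (-(1/2)*((a+c)*(2*a*((b-q)*(q-d)-(a-p)*(p-c)) - 2*b*((a-p)*(q-d)+(b-q)*(p-c)))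
      + (b+d)*(2*b*((a-p)*(p-c)-(b-q)*(q-d)) - 2*a*((b-q)*(p-c)+(a-p)*(q-d))))
      - ((p-c)^2+(q-d)^2)*((a-p)*(a+c)+(b-q)*(b+d))) * h2
    + (-(1/2)*((a+c)*(2*a*((b-q)*(q-d)-(a-p)*(p-c)) - 2*b*((a-p)*(q-d)+(b-q)*(p-c)))
      + (b+d)*(2*b*((a-p)*(p-c)-(b-q)*(q-d)) - 2*a*((b-q)*(p-c)+(a-p)*(q-d))))
      - ((a-p)^2+(b-q)^2)*((p-c)*(a+c)+(q-d)*(b+d))) * h3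

lemma sq2_eq {x y : ℝ} (h : x^2 + y^2 = 0) : x = 0 ∧ y = 0 := by
  constructor <;> nlinarith [sq_nonneg x, sq_nonneg y]

lemma circle_swap {r : ℝ} {k l k' l' : ℤ × ℤ}
    (hk : ((k.1:ℝ))^2+((k.2:ℝ))^2 = r^2) (hl : ((l.1:ℝ))^2+((l.2:ℝ))^2 = r^2)
    (hk' : ((k'.1:ℝ))^2+((k'.2:ℝ))^2 = r^2) (hl' : ((l'.1:ℝ))^2+((l'.2:ℝ))^2 = r^2)
    (hsum : k + l = k' + l') (hs : k + l ≠ 0) :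
    (k' = k ∧ l' = l) ∨ (k' = l ∧ l' = k) := by
  have hs1 : l'.1 = k.1 + l.1 - k'.1 := by
    have := congrArg Prod.fst hsum; simp only [Prod.fst_add] at this; omega
  have hs2 : l'.2 = k.2 + l.2 - k'.2 := by
    have := congrArg Prod.snd hsum; simp only [Prod.snd_add] at this; omega
  have h1 : ((k.1:ℝ))^2+((k.2:ℝ))^2 = ((l.1:ℝ))^2+((l.2:ℝ))^2 := hk.trans hl.symm
  have h2 : ((k'.1:ℝ))^2+((k'.2:ℝ))^2 = ((k.1:ℝ))^2+((k.2:ℝ))^2 := hk'.trans hk.symm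
  have h3 : (((k.1:ℝ))+((l.1:ℝ))-((k'.1:ℝ)))^2+(((k.2:ℝ))+((l.2:ℝ))-((k'.2:ℝ)))^2
      = ((k.1:ℝ))^2+((k.2:ℝ))^2 := by
    have := hl'.trans hk.symm
    rw [hs1, hs2] at this; push_cast at this; linarith [this]
  have key := circle_key (k.1:ℝ) (k.2:ℝ) (l.1:ℝ) (l.2:ℝ) (k'.1:ℝ) (k'.2:ℝ) h1 h2 h3
  have hspos : (((k.1:ℝ))+((l.1:ℝ)))^2+(((k.2:ℝ))+((l.2:ℝ)))^2 ≠ 0 := by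
    have : k.1 + l.1 ≠ 0 ∨ k.2 + l.2 ≠ 0 := by
      by_contra h; push_neg at h
      exact hs (by ext <;> simp [Prod.fst_add, Prod.snd_add] <;> omega)
    rcases this with h | h
    · have : ((k.1:ℝ)) + ((l.1:ℝ)) ≠ 0 := by exact_mod_cast (by exact_mod_cast h : ((k.1+l.1 : ℤ):ℝ) ≠ 0)
      positivity
    · have : ((k.2:ℝ)) + ((l.2:ℝ)) ≠ 0 := by exact_mod_cast (by exact_mod_cast h : ((k.2+l.2 : ℤ):ℝ) ≠ 0)
      positivity
  have hprod : (((k.1:ℝ))-((k'.1:ℝ)))^2+(((k.2:ℝ))-((k'.2:ℝ)))^2 = 0 ∨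
      (((k'.1:ℝ))-((l.1:ℝ)))^2+(((k'.2:ℝ))-((l.2:ℝ)))^2 = 0 := by
    rcases mul_eq_zero.1 key with h | h
    · exact mul_eq_zero.1 h
    · exact absurd h hspos
  rcases hprod with h | h
  · left
    obtain ⟨hx, hy⟩ := sq2_eq h
    have e1 : k'.1 = k.1 := by
      have : (k.1:ℝ) = (k'.1:ℝ) := by linarith
      exact_mod_cast this.symm
    have e2 : k'.2 = k.2 := by
      have : (k.2:ℝ) = (k'.2:ℝ) := by linarith
      exact_mod_cast this.symm
    exact ⟨Prod.ext e1 e2, Prod.ext (by omega) (by omega)⟩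
  · right
    obtain ⟨hx, hy⟩ := sq2_eq h
    have e1 : k'.1 = l.1 := by
      have : (k'.1:ℝ) = (l.1:ℝ) := by linarith
      exact_mod_cast this
    have e2 : k'.2 = l.2 := by
      have : (k'.2:ℝ) = (l.2:ℝ) := by linarith
      exact_mod_cast this
    exact ⟨Prod.ext e1 e2, Prod.ext (by omega) (by omega)⟩

lemma comb_bound (r : ℝ) (T : Finset (ℤ × ℤ))
    (hT : ∀ k ∈ T, ((k.1:ℝ))^2 + ((k.2:ℝ))^2 = r^2)
    (w : ℤ × ℤ → ℝ) (hw : ∀ k, 0 ≤ w k) :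
    ∑ p ∈ T ×ˢ T, ∑ q ∈ T ×ˢ T,
        (if q.1 + q.2 = p.1 + p.2 then (w p.1 * w p.2) * (w q.1 * w q.2) else 0)
      ≤ 3 * (∑ k ∈ T, w k ^ 2) ^ 2 := by
  classical
  set P := T ×ˢ T with hP
  set A : ℝ := ∑ k ∈ T, w k ^ 2 with hA
  have hA0 : 0 ≤ A := Finset.sum_nonneg fun k _ => sq_nonneg _
  let W : (ℤ × ℤ) × (ℤ × ℤ) → ℝ := fun p => w p.1 * w p.2
  have hW0 : ∀ p, 0 ≤ W p := fun p => mul_nonneg (hw _) (hw _)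
  let B : ℤ × ℤ → ℝ := fun s => ∑ q ∈ P.filter (fun q => q.1 + q.2 = s), W q
  have hB0 : ∀ s, 0 ≤ B s := fun s => Finset.sum_nonneg fun q _ => hW0 q
  show (∑ p ∈ P, ∑ q ∈ P, if q.1 + q.2 = p.1 + p.2 then W p * W q else 0) ≤ 3 * A ^ 2
  have step1 : ∀ p, (∑ q ∈ P, if q.1 + q.2 = p.1 + p.2 then W p * W q else 0)
      = W p * B (p.1 + p.2) := by
    intro p
    have hb : B (p.1 + p.2) = ∑ q ∈ P.filter (fun q => q.1 + q.2 = p.1 + p.2), W q := rfl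
    rw [hb, Finset.mul_sum, Finset.sum_filter]
  have step2 : ∑ p ∈ P, W p * B (p.1 + p.2)
      = ∑ s ∈ P.image (fun p => p.1 + p.2), B s ^ 2 := by
    rw [← Finset.sum_fiberwise_of_maps_to (g := fun p => p.1 + p.2)
      (fun p hp => Finset.mem_image_of_mem _ hp) (fun p => W p * B (p.1 + p.2))]
    refine Finset.sum_congr rfl fun s hs => ?_
    rw [Finset.sum_congr rfl (fun p hp => by rw [(Finset.mem_filter.1 hp).2] :
      ∀ p ∈ P.filter (fun p => p.1 + p.2 = s), W p * B (p.1 + p.2) = W p * B s),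
      ← Finset.sum_mul]
    have hb : B s = ∑ q ∈ P.filter (fun q => q.1 + q.2 = s), W q := rfl
    rw [← hb, sq]
  have fiber_sq_bound : ∀ s ∈ P.image (fun p => p.1 + p.2),
      B s ^ 2 ≤ (if s = 0 then A ^ 2 else 0)
        + 2 * ∑ p ∈ P.filter (fun p => p.1 + p.2 = s), W p ^ 2 := by
    intro s hs
    have hnn : 0 ≤ ∑ p ∈ P.filter (fun p => p.1 + p.2 = s), W p ^ 2 :=
      Finset.sum_nonneg fun p _ => sq_nonneg _
    rcases eq_or_ne s 0 with h0 | h0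
    · subst h0
      rw [if_pos rfl]
      have hB0A : B 0 ≤ A := by
        have hle : B 0 ≤ ∑ p ∈ P.filter (fun p => p.1 + p.2 = 0), (w p.1 ^ 2 + w p.2 ^ 2) / 2 := by
          refine Finset.sum_le_sum fun p _ => ?_
          show w p.1 * w p.2 ≤ _
          nlinarith [sq_nonneg (w p.1 - w p.2), hw p.1, hw p.2]
        have h1 : ∑ p ∈ P.filter (fun p => p.1 + p.2 = 0), w p.1 ^ 2 ≤ A := by
          have himg : ∑ k ∈ (P.filter (fun p => p.1 + p.2 = 0)).image Prod.fst, w k ^ 2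
              = ∑ p ∈ P.filter (fun p => p.1 + p.2 = 0), w p.1 ^ 2 := by
            refine Finset.sum_image ?_
            intro p hp q hq hpq
            have hp' : p.2 = -p.1 := eq_neg_of_add_eq_zero_right (Finset.mem_filter.1 hp).2
            have hq' : q.2 = -q.1 := eq_neg_of_add_eq_zero_right (Finset.mem_filter.1 hq).2
            exact Prod.ext hpq (by rw [hp', hq', hpq])
          rw [← himg]
          refine Finset.sum_le_sum_of_subset_of_nonneg ?_ (fun k _ _ => sq_nonneg _)
          intro k hk
          obtain ⟨p, hp, rfl⟩ := Finset.mem_image.1 hk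
          exact (Finset.mem_product.1 (Finset.mem_filter.1 hp).1).1
        have h2 : ∑ p ∈ P.filter (fun p => p.1 + p.2 = 0), w p.2 ^ 2 ≤ A := by
          have himg : ∑ k ∈ (P.filter (fun p => p.1 + p.2 = 0)).image Prod.snd, w k ^ 2
              = ∑ p ∈ P.filter (fun p => p.1 + p.2 = 0), w p.2 ^ 2 := by
            refine Finset.sum_image ?_
            intro p hp q hq hpq
            have hp' : p.1 = -p.2 := eq_neg_of_add_eq_zero_left (Finset.mem_filter.1 hp).2
            have hq' : q.1 = -q.2 := eq_neg_of_add_eq_zero_left (Finset.mem_filter.1 hq).2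
            exact Prod.ext (by rw [hp', hq', hpq]) hpq
          rw [← himg]
          refine Finset.sum_le_sum_of_subset_of_nonneg ?_ (fun k _ _ => sq_nonneg _)
          intro k hk
          obtain ⟨p, hp, rfl⟩ := Finset.mem_image.1 hk
          exact (Finset.mem_product.1 (Finset.mem_filter.1 hp).1).2
        have hsplit : ∑ p ∈ P.filter (fun p => p.1 + p.2 = 0), (w p.1 ^ 2 + w p.2 ^ 2) / 2
            = ((∑ p ∈ P.filter (fun p => p.1 + p.2 = 0), w p.1 ^ 2)
              + ∑ p ∈ P.filter (fun p => p.1 + p.2 = 0), w p.2 ^ 2) / 2 := by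
          rw [← Finset.sum_add_distrib, Finset.sum_div]
        linarith [hle, hsplit ▸ hle]
      nlinarith [hB0 0, hnn]
    · rw [if_neg h0]
      have hcard : ((P.filter (fun p => p.1 + p.2 = s)).card : ℝ) ≤ 2 := by
        rcases (P.filter (fun p => p.1 + p.2 = s)).eq_empty_or_nonempty with hE | hNE
        · rw [hE]; norm_num
        · obtain ⟨p₀, hp₀⟩ := hNE
          have hsub : P.filter (fun p => p.1 + p.2 = s) ⊆ {p₀, (p₀.2, p₀.1)} := by
            intro q hq
            have hq' := Finset.mem_filter.1 hq
            have hp₀' := Finset.mem_filter.1 hp₀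
            have hqP := Finset.mem_product.1 hq'.1
            have hpP := Finset.mem_product.1 hp₀'.1
            have hsum : p₀.1 + p₀.2 = q.1 + q.2 := by rw [hp₀'.2, hq'.2]
            have hsne : p₀.1 + p₀.2 ≠ 0 := by rw [hp₀'.2]; exact h0
            rcases circle_swap (hT _ hpP.1) (hT _ hpP.2) (hT _ hqP.1) (hT _ hqP.2)
                hsum hsne with ⟨e1, e2⟩ | ⟨e1, e2⟩
            · exact Finset.mem_insert.2 (Or.inl (Prod.ext e1 e2))
            · exact Finset.mem_insert.2 (Or.inr (Finset.mem_singleton.2 (Prod.ext e1 e2)))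
          calc ((P.filter (fun p => p.1 + p.2 = s)).card : ℝ)
              ≤ (({p₀, (p₀.2, p₀.1)} : Finset ((ℤ×ℤ)×(ℤ×ℤ))).card : ℝ) := by
                exact_mod_cast Finset.card_le_card hsub
            _ ≤ 2 := by
                have := Finset.card_insert_le p₀ ({(p₀.2, p₀.1)} : Finset ((ℤ×ℤ)×(ℤ×ℤ)))
                simp only [Finset.card_singleton] at this
                exact_mod_cast this
      have hcs : B s ^ 2 ≤ ((P.filter (fun p => p.1 + p.2 = s)).card : ℝ)
          * ∑ p ∈ P.filter (fun p => p.1 + p.2 = s), W p ^ 2 :=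
        sq_sum_le_card_mul_sum_sq
      calc B s ^ 2 ≤ _ := hcs
        _ ≤ 2 * ∑ p ∈ P.filter (fun p => p.1 + p.2 = s), W p ^ 2 :=
            mul_le_mul_of_nonneg_right hcard hnn
        _ = 0 + 2 * ∑ p ∈ P.filter (fun p => p.1 + p.2 = s), W p ^ 2 := by rw [zero_add]
  have sumWsq : ∑ p ∈ P, W p ^ 2 = A ^ 2 := by
    rw [hP, Finset.sum_product, hA, sq, Finset.sum_mul]
    refine Finset.sum_congr rfl fun k _ => ?_
    rw [Finset.mul_sum]
    refine Finset.sum_congr rfl fun l _ => ?_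
    show (w k * w l) ^ 2 = w k ^ 2 * w l ^ 2
    ring
  calc (∑ p ∈ P, ∑ q ∈ P, if q.1 + q.2 = p.1 + p.2 then W p * W q else 0)
      = ∑ s ∈ P.image (fun p => p.1 + p.2), B s ^ 2 := by
        rw [Finset.sum_congr rfl fun p _ => step1 p, step2]
    _ ≤ ∑ s ∈ P.image (fun p => p.1 + p.2), ((if s = 0 then A ^ 2 else 0)
          + 2 * ∑ p ∈ P.filter (fun p => p.1 + p.2 = s), W p ^ 2) :=
        Finset.sum_le_sum fiber_sq_bound
    _ = (∑ s ∈ P.image (fun p => p.1 + p.2), (if s = 0 then A ^ 2 else 0))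
          + 2 * ∑ s ∈ P.image (fun p => p.1 + p.2),
              ∑ p ∈ P.filter (fun p => p.1 + p.2 = s), W p ^ 2 := by
        rw [Finset.sum_add_distrib, Finset.mul_sum]
    _ ≤ A ^ 2 + 2 * A ^ 2 := by
        have h1 : (∑ s ∈ P.image (fun p => p.1 + p.2), (if s = 0 then A ^ 2 else 0)) ≤ A ^ 2 := by
          rw [Finset.sum_ite_eq' (P.image (fun p => p.1 + p.2)) 0 (fun _ => A ^ 2)]
          split
          · exact le_refl _
          · positivity
        have h2 : ∑ s ∈ P.image (fun p => p.1 + p.2),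
            ∑ p ∈ P.filter (fun p => p.1 + p.2 = s), W p ^ 2 = A ^ 2 := by
          rw [Finset.sum_fiberwise_of_maps_to (fun p hp => Finset.mem_image_of_mem _ hp), sumWsq]
        rw [h2]
        linarith
    _ = 3 * A ^ 2 := by ring

end Zyg

open Zyg

/-- **Zygmund's restriction theorem on the torus.** There is `C > 0` such that for every
smooth doubly `1`-periodic `f : ℝ² → ℂ` and every `r > 0`,
`(Σ_{μ∈ℤ², |μ|=r} |c_μ|²)^{1/2} ≤ C ‖f‖_{L^{4/3}([0,1]²)}`, where
`c_μ = ∫_{[0,1]²} e^{-2πi μ·x} f(x) dx`. -/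
theorem zygmund_restriction_torus :
    ∃ C : ℝ, 0 < C ∧
      ∀ f : ℝ × ℝ → ℂ, ContDiff ℝ (⊤ : ℕ∞) f →
        (∀ x : ℝ × ℝ, f (x.1 + 1, x.2) = f x ∧ f (x.1, x.2 + 1) = f x) →
        ∀ r : ℝ, 0 < r →
          Real.sqrt (∑' μ : {μ : ℤ × ℤ // ((μ.1 : ℝ) ^ 2 + (μ.2 : ℝ) ^ 2 = r ^ 2)},
              ‖∫ x in Set.Icc (0 : ℝ) 1 ×ˢ Set.Icc (0 : ℝ) 1,
                  Complex.exp (-2 * π * Complex.I *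
                    (((μ : ℤ × ℤ).1 : ℝ) * x.1 + ((μ : ℤ × ℤ).2 : ℝ) * x.2)) * f x‖ ^ 2)
            ≤ C * (eLpNorm f (ENNReal.ofReal (4 / 3))
                (volume.restrict (Set.Icc (0 : ℝ) 1 ×ˢ Set.Icc (0 : ℝ) 1))).toReal := by
  refine ⟨2, two_pos, ?_⟩
  intro f hf _hper r hr
  have hfc : Continuous f := hf.continuous
  set μQ : Measure (ℝ × ℝ) := volume.restrict Qs with hμQ
  set c : ℤ × ℤ → ℂ := fun k => ∫ x in Qs, e k x * f x with hc
  -- finiteness of the circle set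
  have hfin : {μ : ℤ × ℤ | ((μ.1:ℝ))^2 + ((μ.2:ℝ))^2 = r^2}.Finite := by
    apply Set.Finite.subset (Set.finite_Icc (-⌈r⌉, -⌈r⌉) (⌈r⌉, ⌈r⌉))
    rintro ⟨m, n⟩ hmn
    simp only [Set.mem_setOf_eq] at hmn
    have hceil := Int.le_ceil r
    have hm1 : -r ≤ ((m:ℝ)) ∧ ((m:ℝ)) ≤ r := by
      constructor <;> nlinarith [sq_nonneg ((n:ℝ)), sq_nonneg ((m:ℝ) - r), sq_nonneg ((m:ℝ) + r)]
    have hn1 : -r ≤ ((n:ℝ)) ∧ ((n:ℝ)) ≤ r := by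
      constructor <;> nlinarith [sq_nonneg ((m:ℝ)), sq_nonneg ((n:ℝ) - r), sq_nonneg ((n:ℝ) + r)]
    have hmu : m ≤ ⌈r⌉ := by exact_mod_cast le_trans hm1.2 hceil
    have hnu : n ≤ ⌈r⌉ := by exact_mod_cast le_trans hn1.2 hceil
    have hml : -⌈r⌉ ≤ m := by
      have : -((⌈r⌉:ℤ):ℝ) ≤ ((m:ℝ)) := le_trans (by linarith) hm1.1
      exact_mod_cast this
    have hnl : -⌈r⌉ ≤ n := by
      have : -((⌈r⌉:ℤ):ℝ) ≤ ((n:ℝ)) := le_trans (by linarith) hn1.1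
      exact_mod_cast this
    exact Set.mem_Icc.2 ⟨⟨hml, hnl⟩, ⟨hmu, hnu⟩⟩
  set T : Finset (ℤ × ℤ) := hfin.toFinset with hT
  have hTmem : ∀ k : ℤ × ℤ, k ∈ T ↔ ((k.1:ℝ))^2 + ((k.2:ℝ))^2 = r^2 := fun k =>
    hfin.mem_toFinset
  set A : ℝ := ∑ k ∈ T, ‖c k‖^2 with hA
  have hA0 : 0 ≤ A := Finset.sum_nonneg fun k _ => sq_nonneg _
  -- the tsum equals the finite sum
  haveI hFT : Fintype {μ : ℤ × ℤ // ((μ.1 : ℝ) ^ 2 + (μ.2 : ℝ) ^ 2 = r ^ 2)} :=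
    hfin.fintype
  have htsum : (∑' μ : {μ : ℤ × ℤ // ((μ.1 : ℝ) ^ 2 + (μ.2 : ℝ) ^ 2 = r ^ 2)},
      ‖c (μ : ℤ × ℤ)‖^2) = A := by
    rw [tsum_fintype, hA]
    exact (Finset.sum_subtype T (fun k => hTmem k) (fun k => ‖c k‖^2)).symm
  -- the dual function
  set h : ℝ × ℝ → ℂ := fun x => ∑ k ∈ T, (starRingEnd ℂ) (c k) * e k x with hh_def
  have hh : Continuous h := continuous_finset_sum _ fun k _ =>
    continuous_const.mul (continuous_e k)
  -- step 1 : ∫ h f = A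
  have key1 : ∫ x in Qs, h x * f x = (A : ℂ) := by
    have hsplit : ∀ x : ℝ × ℝ, h x * f x
        = ∑ k ∈ T, (starRingEnd ℂ) (c k) * (e k x * f x) := by
      intro x
      rw [hh_def, Finset.sum_mul]
      exact Finset.sum_congr rfl fun k _ => by ring
    simp_rw [hsplit]
    rw [integral_finset_sum T (f := fun k x => (starRingEnd ℂ) (c k) * (e k x * f x)) (fun k _ =>
      ((integrableOn_Qs ((continuous_e k).mul hfc)).const_mul _))]
    simp_rw [integral_const_mul]
    rw [hA]
    push_cast
    refine Finset.sum_congr rfl fun k _ => ?_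
    have hck : (∫ x in Qs, e k x * f x) = c k := rfl
    rw [hck, mul_comm, Complex.mul_conj']
  -- step 2 : L⁴ bound on h
  have key2 : ∫ x in Qs, ‖h x‖^4 ≤ 3 * A^2 := by
    set P := T ×ˢ T with hP
    set D : (ℤ × ℤ) × (ℤ × ℤ) → ℂ :=
      fun p => (starRingEnd ℂ) (c p.1) * (starRingEnd ℂ) (c p.2) with hD
    have hh2 : ∀ x, h x * h x = ∑ p ∈ P, D p * e (p.1 + p.2) x := by
      intro x
      rw [hh_def]
      rw [Finset.sum_mul_sum]
      rw [hP, Finset.sum_product]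
      refine Finset.sum_congr rfl fun k _ => Finset.sum_congr rfl fun l _ => ?_
      rw [← e_mul k l x]
      show _ = ((starRingEnd ℂ) (c k) * (starRingEnd ℂ) (c l)) * (e k x * e l x)
      ring
    have hGx : ∀ x, ((‖h x‖^4 : ℝ) : ℂ)
        = ∑ p ∈ P, ∑ q ∈ P, (D p * (starRingEnd ℂ) (D q))
            * (e (p.1 + p.2) x * (starRingEnd ℂ) (e (q.1 + q.2) x)) := by
      intro x
      have h1 : ((‖h x‖^4 : ℝ) : ℂ) = (h x * h x) * (starRingEnd ℂ) (h x * h x) := by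
        rw [Complex.mul_conj', norm_mul]
        push_cast
        ring
      rw [h1, hh2, map_sum, Finset.sum_mul_sum]
      exact Finset.sum_congr rfl fun p _ => Finset.sum_congr rfl fun q _ => by
        rw [map_mul]; ring
    have hint_eq : ∀ a b : ℤ × ℤ,
        IntegrableOn (fun x => e a x * (starRingEnd ℂ) (e b x)) Qs := fun a b =>
      integrableOn_Qs ((continuous_e a).mul (Complex.continuous_conj.comp (continuous_e b)))
    have hGint : ∫ x in Qs, ((‖h x‖^4 : ℝ) : ℂ)
        = ∑ p ∈ P, ∑ q ∈ P, (D p * (starRingEnd ℂ) (D q))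
            * (if p.1 + p.2 = q.1 + q.2 then 1 else 0) := by
      simp_rw [hGx]
      rw [integral_finset_sum P (fun p _ => integrable_finset_sum P (fun q _ =>
        (hint_eq (p.1 + p.2) (q.1 + q.2)).const_mul _))]
      refine Finset.sum_congr rfl fun p _ => ?_
      rw [integral_finset_sum P (fun q _ => (hint_eq (p.1 + p.2) (q.1 + q.2)).const_mul _)]
      refine Finset.sum_congr rfl fun q _ => ?_
      rw [integral_const_mul, e_orth]
    have hnn4 : 0 ≤ ∫ x in Qs, ‖h x‖^4 := integral_nonneg fun x => by positivity
    have h4int : ∫ x in Qs, ((‖h x‖^4 : ℝ) : ℂ) = ((∫ x in Qs, ‖h x‖^4 : ℝ) : ℂ) :=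
      integral_ofReal
    calc ∫ x in Qs, ‖h x‖^4 = ‖((∫ x in Qs, ‖h x‖^4 : ℝ) : ℂ)‖ := by
          rw [Complex.norm_real]
          exact (abs_of_nonneg hnn4).symm
      _ = ‖∑ p ∈ P, ∑ q ∈ P, (D p * (starRingEnd ℂ) (D q))
            * (if p.1 + p.2 = q.1 + q.2 then 1 else 0)‖ := by rw [← h4int, hGint]
      _ ≤ ∑ p ∈ P, ∑ q ∈ P, ‖(D p * (starRingEnd ℂ) (D q))
            * (if p.1 + p.2 = q.1 + q.2 then (1:ℂ) else 0)‖ :=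
          (norm_sum_le _ _).trans (Finset.sum_le_sum fun p _ => norm_sum_le _ _)
      _ = ∑ p ∈ P, ∑ q ∈ P, (if q.1 + q.2 = p.1 + p.2
            then (‖c p.1‖ * ‖c p.2‖) * (‖c q.1‖ * ‖c q.2‖) else 0) := by
          refine Finset.sum_congr rfl fun p _ => Finset.sum_congr rfl fun q _ => ?_
          rcases eq_or_ne (p.1 + p.2) (q.1 + q.2) with hpq | hpq
          · rw [if_pos hpq, if_pos hpq.symm, mul_one, hD]
            simp only [norm_mul, RCLike.norm_conj]
          · rw [if_neg hpq, if_neg (Ne.symm hpq), mul_zero, norm_zero]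
      _ ≤ 3 * A^2 := by
          have := comb_bound r T (fun k hk => (hTmem k).1 hk) (fun k => ‖c k‖)
            (fun k => norm_nonneg _)
          simpa [hA] using this
  -- Hölder
  have hfin_f : eLpNorm f (ENNReal.ofReal (4/3)) μQ ≠ ⊤ := by
    obtain ⟨M, hM⟩ := isCompact_Qs.exists_bound_of_continuousOn hfc.continuousOn
    refine ne_of_lt (lt_of_le_of_lt (eLpNorm_le_of_ae_bound (C := M)
      (ae_restrict_of_forall_mem (measurableSet_Icc.prod measurableSet_Icc) hM)) ?_)
    exact ENNReal.mul_lt_top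
      (ENNReal.rpow_lt_top_of_nonneg (by positivity)
        (by simpa [hμQ, Measure.restrict_apply] using isCompact_Qs.measure_lt_top.ne))
      ENNReal.ofReal_lt_top
  have step_main : A ≤ (eLpNorm f (ENNReal.ofReal (4/3)) μQ).toReal
      * (3 * A^2) ^ ((1:ℝ)/4) := by
    have h1 : A ≤ ∫ x in Qs, ‖h x * f x‖ := by
      calc A = ‖(A : ℂ)‖ := by rw [Complex.norm_real, Real.norm_eq_abs, abs_of_nonneg hA0]
        _ = ‖∫ x in Qs, h x * f x‖ := by rw [key1]
        _ ≤ ∫ x in Qs, ‖h x * f x‖ := norm_integral_le_integral_norm _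
    have h2 : ∫ x in Qs, ‖h x * f x‖ = (∫⁻ x in Qs, (‖h x * f x‖₊ : ℝ≥0∞)).toReal :=
      integral_norm_eq_lintegral_enorm ((hh.mul hfc).aestronglyMeasurable.restrict)
    have hpq : Real.HolderConjugate (4/3) 4 := ⟨by norm_num, by norm_num, by norm_num⟩
    have h3 : (∫⁻ x in Qs, (‖h x * f x‖₊ : ℝ≥0∞))
        ≤ (∫⁻ x in Qs, (‖f x‖₊ : ℝ≥0∞) ^ (4/3 : ℝ)) ^ (1/(4/3) : ℝ)
          * (∫⁻ x in Qs, (‖h x‖₊ : ℝ≥0∞) ^ (4 : ℝ)) ^ (1/(4:ℝ)) := by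
      have := ENNReal.lintegral_mul_le_Lp_mul_Lq μQ hpq
        (hfc.measurable.nnnorm.coe_nnreal_ennreal.aemeasurable)
        (hh.measurable.nnnorm.coe_nnreal_ennreal.aemeasurable)
      refine le_trans (le_of_eq ?_) this
      apply lintegral_congr
      intro x
      simp [nnnorm_mul, ENNReal.coe_mul, mul_comm]
    have h4 : (∫⁻ x in Qs, (‖h x‖₊ : ℝ≥0∞) ^ (4 : ℝ)) ≤ ENNReal.ofReal (3 * A^2) := by
      have hint4 : Integrable (fun x => ‖h x‖^4) μQ := integrableOn_Qs (hh.norm.pow 4)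
      have heq : ENNReal.ofReal (∫ x in Qs, ‖h x‖^4)
          = (∫⁻ x in Qs, (‖h x‖₊ : ℝ≥0∞) ^ (4 : ℝ)) := by
        rw [ofReal_integral_eq_lintegral_ofReal hint4
          (Filter.Eventually.of_forall fun x => by positivity)]
        apply lintegral_congr
        intro x
        rw [show ((‖h x‖₊ : ℝ≥0∞)) = ENNReal.ofReal ‖h x‖ from (ofReal_norm (h x)).symm, ← Real.rpow_natCast ‖h x‖ 4,
          ← ENNReal.ofReal_rpow_of_nonneg (norm_nonneg _) (by norm_num : (0:ℝ) ≤ ((4:ℕ):ℝ))]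
        norm_num
      rw [← heq]
      exact ENNReal.ofReal_le_ofReal key2
    have hE : (∫⁻ x in Qs, (‖f x‖₊ : ℝ≥0∞) ^ (4/3 : ℝ)) ^ (1/(4/3) : ℝ)
        = eLpNorm f (ENNReal.ofReal (4/3)) μQ := by
      rw [eLpNorm_eq_lintegral_rpow_enorm_toReal
        ((ENNReal.ofReal_pos.2 (by norm_num : (0:ℝ) < 4/3)).ne') ENNReal.ofReal_ne_top,
        ENNReal.toReal_ofReal (by norm_num : (0:ℝ) ≤ 4/3)]
      rfl
    have h5 : (∫⁻ x in Qs, (‖h x * f x‖₊ : ℝ≥0∞))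
        ≤ eLpNorm f (ENNReal.ofReal (4/3)) μQ * ENNReal.ofReal ((3 * A^2) ^ ((1:ℝ)/4)) := by
      refine h3.trans ?_
      rw [hE]
      refine mul_le_mul' le_rfl ?_
      have hmono := ENNReal.rpow_le_rpow h4 (by norm_num : (0:ℝ) ≤ 1/4)
      rw [← ENNReal.ofReal_rpow_of_nonneg (by positivity) (by norm_num : (0:ℝ) ≤ 1/4)]
      exact hmono
    have h6 : A ≤ ((eLpNorm f (ENNReal.ofReal (4/3)) μQ)
        * ENNReal.ofReal ((3 * A^2) ^ ((1:ℝ)/4))).toReal := by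
      refine le_trans (h1.trans (le_of_eq h2)) ?_
      exact ENNReal.toReal_mono (ENNReal.mul_ne_top hfin_f ENNReal.ofReal_ne_top) h5
    rwa [ENNReal.toReal_mul, ENNReal.toReal_ofReal (by positivity)] at h6
  -- final arithmetic
  have hfinal : Real.sqrt A ≤ 2 * (eLpNorm f (ENNReal.ofReal (4/3)) μQ).toReal := by
    set F := (eLpNorm f (ENNReal.ofReal (4/3)) μQ).toReal with hF
    have hF0 : 0 ≤ F := ENNReal.toReal_nonneg
    rcases eq_or_lt_of_le hA0 with hAz | hApos
    · rw [← hAz, Real.sqrt_zero]; positivity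
    · have ht : (0:ℝ) < A ^ ((1:ℝ)/2) := Real.rpow_pos_of_pos hApos _
      have htsq : (A ^ ((1:ℝ)/2)) ^ 2 = A := by
        rw [← Real.rpow_natCast (A ^ ((1:ℝ)/2)) 2, ← Real.rpow_mul hA0]
        norm_num
      have hc34 : (3:ℝ) ^ ((1:ℝ)/4) ≤ 2 := by
        have h16 : ((16:ℝ)) ^ ((1:ℝ)/4) = 2 := by
          rw [show (16:ℝ) = 2 ^ (4:ℕ) by norm_num, ← Real.rpow_natCast 2 4,
            ← Real.rpow_mul (by norm_num : (0:ℝ) ≤ 2)]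
          norm_num
        calc (3:ℝ) ^ ((1:ℝ)/4) ≤ (16:ℝ) ^ ((1:ℝ)/4) :=
            Real.rpow_le_rpow (by norm_num) (by norm_num) (by norm_num)
          _ = 2 := h16
      have hc34pos : (0:ℝ) < (3:ℝ) ^ ((1:ℝ)/4) := Real.rpow_pos_of_pos (by norm_num) _
      have hsplit : (3 * A^2) ^ ((1:ℝ)/4) = 3 ^ ((1:ℝ)/4) * A ^ ((1:ℝ)/2) := by
        rw [Real.mul_rpow (by norm_num) (sq_nonneg _)]
        congr 1
        rw [← Real.rpow_natCast A 2, ← Real.rpow_mul hA0]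
        norm_num
      rw [hsplit] at step_main
      rw [Real.sqrt_eq_rpow]
      nlinarith [step_main, mul_nonneg hF0 ht.le, htsq, ht, hF0, hc34,
        mul_nonneg (mul_nonneg hF0 ht.le) (sub_nonneg.2 hc34)]
  show Real.sqrt (∑' μ : {μ : ℤ × ℤ // ((μ.1 : ℝ) ^ 2 + (μ.2 : ℝ) ^ 2 = r ^ 2)},
      ‖c (μ : ℤ × ℤ)‖ ^ 2) ≤ 2 * (eLpNorm f (ENNReal.ofReal (4/3)) μQ).toReal
  rw [htsum]
  exact hfinal
end
end

section
/- Bourgain's L⁴ Strichartz estimate on the one-dimensional torus: there exists a constant C such that for every finitely supported sequence (a_k)_{k∈ℤ} of complex numbers, ‖Σ_{k∈ℤ} a_k e^{2πi(kx + k²t)}‖_{L⁴(𝕋²)} ≤ C (Σ_k |a_k|²)^{1/2}. -/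
/-!
Write `u = Σ_k a_k e(k x + k² t)`. Then `|u|⁴ = |u²|²`, and `u²` is a trigonometric polynomial
whose frequency `(k² + l², k + l)` carries the coefficient `a_k a_l`. Since a sum and a sum of
squares determine an unordered pair of integers, each frequency comes from at most two pairs
`(k, l)`; Parseval on the unit square and Cauchy–Schwarz within each frequency give
`‖u‖⁴_{L⁴} ≤ 2 (Σ_k |a_k|²)²`, i.e. the estimate with `C = 2^{1/4}`.
-/

open MeasureTheory Real

noncomputable section

open Finset Complex ComplexConjugate

abbrev unitSquare : Set (ℝ × ℝ) := Set.Icc 0 1 ×ˢ Set.Icc 0 1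

/-- In the coordinates `p = (t, x)` of the statement, the wave `e^{2πi(k x + k² t)}` is
`torusChar (k ^ 2, k)`. -/
def torusChar (ξ : ℤ × ℤ) (p : ℝ × ℝ) : ℂ :=
  Complex.exp (2 * π * I * (ξ.1 * p.1 + ξ.2 * p.2))

theorem continuous_torusChar (ξ : ℤ × ℤ) : Continuous (torusChar ξ) := by
  unfold torusChar; fun_prop

theorem torusChar_add (ξ η : ℤ × ℤ) (p : ℝ × ℝ) :
    torusChar (ξ + η) p = torusChar ξ p * torusChar η p := by
  simp only [torusChar, ← Complex.exp_add, Prod.fst_add, Prod.snd_add, Int.cast_add]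
  ring_nf

theorem torusChar_mul_conj (ξ η : ℤ × ℤ) (p : ℝ × ℝ) :
    torusChar ξ p * conj (torusChar η p) = torusChar (ξ - η) p := by
  simp only [torusChar, ← Complex.exp_conj, ← Complex.exp_add, map_mul, map_add, conj_I,
    conj_ofReal, map_ofNat, map_intCast, Prod.fst_sub, Prod.snd_sub, Int.cast_sub]
  ring_nf

theorem integrableOn_torusChar (ξ : ℤ × ℤ) : IntegrableOn (torusChar ξ) unitSquare :=
  (continuous_torusChar ξ).continuousOn.integrableOn_compact (isCompact_Icc.prod isCompact_Icc)

theorem integral_exp_two_pi_I_int_mul (n : ℤ) :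
    ∫ x in Set.Icc (0 : ℝ) 1, Complex.exp (2 * π * I * n * x) = if n = 0 then 1 else 0 := by
  rw [integral_Icc_eq_integral_Ioc, ← intervalIntegral.integral_of_le zero_le_one]
  split_ifs with hn
  · simp [hn]
  · have hc : 2 * π * I * n ≠ 0 := by simp [pi_ne_zero, I_ne_zero, hn]
    have hper : Complex.exp (2 * π * I * n) = 1 := by
      rw [mul_comm]; exact exp_int_mul_two_pi_mul_I n
    simp [integral_exp_mul_complex hc, hper]

theorem integral_torusChar (ξ : ℤ × ℤ) :
    ∫ p in unitSquare, torusChar ξ p = if ξ = 0 then 1 else 0 := by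
  have hsplit : torusChar ξ =
      fun p ↦ Complex.exp (2 * π * I * ξ.1 * p.1) * Complex.exp (2 * π * I * ξ.2 * p.2) := by
    ext p; rw [torusChar, ← Complex.exp_add]; ring_nf
  rw [hsplit, Measure.volume_eq_prod, setIntegral_prod_mul
    (fun x : ℝ ↦ Complex.exp (2 * π * I * ξ.1 * x)) (fun y : ℝ ↦ Complex.exp (2 * π * I * ξ.2 * y)),
    integral_exp_two_pi_I_int_mul, integral_exp_two_pi_I_int_mul, ite_zero_mul_ite_zero, one_mul]
  simp only [Prod.ext_iff, Prod.fst_zero, Prod.snd_zero]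

theorem integral_norm_sq_sum_torusChar (t : Finset (ℤ × ℤ)) (d : ℤ × ℤ → ℂ) :
    ∫ p in unitSquare, ‖∑ ξ ∈ t, d ξ * torusChar ξ p‖ ^ 2 = ∑ ξ ∈ t, ‖d ξ‖ ^ 2 := by
  have hexpand : ∀ p, ((‖∑ ξ ∈ t, d ξ * torusChar ξ p‖ ^ 2 : ℝ) : ℂ) =
      ∑ ξ ∈ t, ∑ η ∈ t, d ξ * conj (d η) * torusChar (ξ - η) p := by
    intro p
    rw [ofReal_pow, ← mul_conj', map_sum, sum_mul_sum]
    refine sum_congr rfl fun ξ _ ↦ sum_congr rfl fun η _ ↦ ?_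
    rw [map_mul, ← torusChar_mul_conj]; ring
  have hint : ∀ ξ η, IntegrableOn (fun p ↦ d ξ * conj (d η) * torusChar (ξ - η) p) unitSquare :=
    fun ξ η ↦ (integrableOn_torusChar _).const_mul _
  apply ofReal_injective
  rw [← integral_complex_ofReal, integral_congr_ae (ae_of_all _ hexpand),
    integral_finsetSum _ fun ξ _ ↦ integrable_finsetSum _ fun η _ ↦ hint ξ η]
  simp only [integral_finsetSum _ fun η _ ↦ hint _ η, integral_const_mul, integral_torusChar,
    sub_eq_zero, mul_ite, mul_one, mul_zero, ofReal_sum, ofReal_pow]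
  refine sum_congr rfl fun ξ hξ ↦ ?_
  rw [sum_ite_eq, if_pos hξ, mul_conj']

theorem norm_sum_sq_le_card_mul {ι E : Type*} [SeminormedAddCommGroup E] (s : Finset ι)
    (f : ι → E) : ‖∑ i ∈ s, f i‖ ^ 2 ≤ #s * ∑ i ∈ s, ‖f i‖ ^ 2 :=
  (pow_le_pow_left₀ (norm_nonneg _) (norm_sum_le s f) 2).trans sq_sum_le_card_mul_sum_sq

theorem integral_norm_sq_sum_torusChar_le {ι : Type*} (s : Finset ι) (c : ι → ℂ)
    (ξ : ι → ℤ × ℤ) {r : ℕ} (hr : ∀ η, #{i ∈ s | ξ i = η} ≤ r) :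
    ∫ p in unitSquare, ‖∑ i ∈ s, c i * torusChar (ξ i) p‖ ^ 2 ≤ r * ∑ i ∈ s, ‖c i‖ ^ 2 := by
  have hfiber : ∀ p, ∑ i ∈ s, c i * torusChar (ξ i) p =
      ∑ η ∈ s.image ξ, (∑ i ∈ s with ξ i = η, c i) * torusChar η p := fun p ↦
    (sum_image' _ fun i _ ↦ by
      rw [sum_mul]; exact sum_congr rfl fun j hj ↦ by rw [(mem_filter.1 hj).2]).symm
  calc ∫ p in unitSquare, ‖∑ i ∈ s, c i * torusChar (ξ i) p‖ ^ 2
      = ∑ η ∈ s.image ξ, ‖∑ i ∈ s with ξ i = η, c i‖ ^ 2 := by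
        simp only [hfiber, integral_norm_sq_sum_torusChar]
    _ ≤ ∑ η ∈ s.image ξ, r * ∑ i ∈ s with ξ i = η, ‖c i‖ ^ 2 :=
        sum_le_sum fun η _ ↦ (norm_sum_sq_le_card_mul _ _).trans (by gcongr; exact hr η)
    _ = r * ∑ i ∈ s, ‖c i‖ ^ 2 := by
        rw [← mul_sum, sum_fiberwise_of_maps_to fun i ↦ mem_image_of_mem ξ]

theorem eq_or_eq_swap_of_add_eq_of_sq_add_sq_eq {k l m n : ℤ} (hsum : k + l = m + n)
    (hsq : k ^ 2 + l ^ 2 = m ^ 2 + n ^ 2) : (m, n) = (k, l) ∨ (m, n) = (l, k) := by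
  obtain rfl : n = k + l - m := by omega
  have : 2 * ((m - k) * (m - l)) = 0 := by linear_combination -hsq
  rcases mul_eq_zero.1 ((mul_eq_zero.1 this).resolve_left two_ne_zero) with h | h
  · left; ext <;> simp <;> omega
  · right; ext <;> simp <;> omega

theorem card_filter_sq_add_sq_add_eq_le_two (s : Finset (ℤ × ℤ)) (η : ℤ × ℤ) :
    #{q ∈ s | (q.1 ^ 2 + q.2 ^ 2, q.1 + q.2) = η} ≤ 2 := by
  rcases eq_empty_or_nonempty {q ∈ s | (q.1 ^ 2 + q.2 ^ 2, q.1 + q.2) = η} with h | ⟨q, hq⟩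
  · simp [h]
  refine (card_le_card (t := {q, q.swap}) fun q' hq' ↦ ?_).trans card_le_two
  have h := (mem_filter.1 hq).2.trans (mem_filter.1 hq').2.symm
  simp only [Prod.mk.injEq] at h
  simpa [Prod.ext_iff] using eq_or_eq_swap_of_add_eq_of_sq_add_sq_eq h.2 h.1

theorem integral_norm_pow_four_sum_torusChar_le (s : Finset ℤ) (a : ℤ → ℂ) :
    ∫ p in unitSquare, ‖∑ k ∈ s, a k * torusChar (k ^ 2, k) p‖ ^ 4 ≤
      2 * (∑ k ∈ s, ‖a k‖ ^ 2) ^ 2 := by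
  have hsq : ∀ p, ‖∑ k ∈ s, a k * torusChar (k ^ 2, k) p‖ ^ 4 =
      ‖∑ q ∈ s ×ˢ s, a q.1 * a q.2 * torusChar (q.1 ^ 2 + q.2 ^ 2, q.1 + q.2) p‖ ^ 2 := by
    intro p
    rw [show 4 = 2 * 2 from rfl, pow_mul, ← norm_pow,
      sq (∑ k ∈ s, a k * torusChar (k ^ 2, k) p), sum_mul_sum, sum_product]
    congr 2
    refine sum_congr rfl fun k _ ↦ sum_congr rfl fun l _ ↦ ?_
    rw [← Prod.mk_add_mk (k ^ 2) (l ^ 2) k l, torusChar_add]; ring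
  have hcoef : ∑ q ∈ s ×ˢ s, ‖a q.1 * a q.2‖ ^ 2 = (∑ k ∈ s, ‖a k‖ ^ 2) ^ 2 := by
    simp only [sq (∑ k ∈ s, ‖a k‖ ^ 2), sum_mul_sum, sum_product, norm_mul, mul_pow]
  simp only [hsq]
  calc _ ≤ (2 : ℕ) * ∑ q ∈ s ×ˢ s, ‖a q.1 * a q.2‖ ^ 2 :=
        integral_norm_sq_sum_torusChar_le _ _ _ (card_filter_sq_add_sq_add_eq_le_two _)
    _ = 2 * (∑ k ∈ s, ‖a k‖ ^ 2) ^ 2 := by rw [hcoef, Nat.cast_ofNat]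

/-- **Bourgain's `L⁴` Strichartz estimate on the one-dimensional torus.** There is a
constant `C` such that for every finitely supported sequence `(a_k)_{k∈ℤ}`,
`‖Σ_k a_k e^{2πi(kx + k²t)}‖_{L⁴(𝕋²)} ≤ C (Σ_k |a_k|²)^{1/2}`. -/
theorem bourgain_L4_strichartz_torus :
    ∃ C : ℝ, 0 < C ∧
      ∀ a : ℤ → ℂ, (Function.support a).Finite →
        (∫ p in Set.Icc (0 : ℝ) 1 ×ˢ Set.Icc (0 : ℝ) 1,
            ‖∑' k : ℤ, a k *
                Complex.exp (2 * π * Complex.I * ((k : ℝ) * p.2 + (k : ℝ) ^ 2 * p.1))‖ ^ 4)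
              ^ (1 / 4 : ℝ)
          ≤ C * Real.sqrt (∑' k : ℤ, ‖a k‖ ^ 2) := by
  refine ⟨2 ^ (1 / 4 : ℝ), by positivity, fun a ha ↦ ?_⟩
  set s := ha.toFinset
  have hs : ∀ k ∉ s, a k = 0 := fun k hk ↦ by simpa [s] using hk
  have hu : ∀ p : ℝ × ℝ, ∑' k : ℤ, a k *
      Complex.exp (2 * π * Complex.I * ((k : ℝ) * p.2 + (k : ℝ) ^ 2 * p.1)) =
      ∑ k ∈ s, a k * torusChar (k ^ 2, k) p := fun p ↦ by
    rw [tsum_eq_sum fun k hk ↦ by rw [hs k hk, zero_mul]]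
    refine sum_congr rfl fun k _ ↦ ?_
    simp only [torusChar]; push_cast; ring_nf
  rw [tsum_eq_sum (s := s) fun k hk ↦ by rw [hs k hk, norm_zero, sq, mul_zero]]
  simp only [hu]
  set S := ∑ k ∈ s, ‖a k‖ ^ 2
  calc _ ≤ (2 * S ^ 2) ^ (1 / 4 : ℝ) :=
        rpow_le_rpow (integral_nonneg fun _ ↦ by positivity)
          (integral_norm_pow_four_sum_torusChar_le s a) (by norm_num)
    _ = 2 ^ (1 / 4 : ℝ) * √S := by
        have hS : 0 ≤ S := sum_nonneg fun k _ ↦ by positivity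
        rw [mul_rpow zero_le_two (by positivity), sqrt_eq_rpow, ← rpow_natCast, ← rpow_mul hS]
        norm_num
end
end
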